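/- The q-multinomial identity qbinom3(l; l-n, l-n, 2n-l) − q · qbinom3(l; l-n-1, l-n+1, 2n-l) = (1/[l-n+1]_q) · qbinom(2(l-n), l-n) · qbinom(l, 2n-l) holds for n ≤ l ≤ 2n, where qbinom3(l; a, b, c) = [l]_q!/([a]_q![b]_q![c]_q!) for a+b+c = l. -/

import Mathlib

inductive Step : Type
  | E | D | N
deriving DecidableEq

instance instFintypeStep : Fintype Step :=
  ⟨{Step.E, Step.D, Step.N}, fun x => by cases x <;> simp⟩

open Step Polynomial

/-- All words of length `l` over the step alphabet. -/
def Words (l : ℕ) : Finset (List Step) :=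
  (Finset.univ : Finset (Fin l → Step)).image List.ofFn

/-- Delannoy paths from (0,0) to (m,n) with `l` steps, encoded as words:
`#E + #D = m`, `#N + #D = n`, length `l`. -/
def DelSet (m n l : ℕ) : Finset (List Step) :=
  (Words l).filter fun w => w.count E + w.count D = m ∧ w.count N + w.count D = n

/-- A word is bad if some prefix contains more N's than E's. -/
def bad (w : List Step) : Bool :=
  (List.range (w.length + 1)).any fun k => (w.take k).count E < (w.take k).count N

/-- Bad Delannoy paths from (0,0) to (n,n) with `l` steps. -/
def BDelSet (n l : ℕ) : Finset (List Step) :=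
  (DelSet n n l).filter fun w => bad w

/-- Schröder paths: Delannoy paths to (n,n) never going above the diagonal. -/
def SchSet (n l : ℕ) : Finset (List Step) :=
  (DelSet n n l).filter fun w => ¬ bad w

/-- Major index of a word w_1 ⋯ w_l with respect to a ranking of the letters:
the sum of all positions i (1 ≤ i ≤ l-1) with w_i > w_{i+1}. -/
def maj (rank : Step → ℕ) (w : List Step) : ℕ :=
  ∑ i ∈ Finset.range (w.length - 1),
    if rank (w.getD (i + 1) E) < rank (w.getD i E) then i + 1 else 0

/-- q-integer [m] = 1 + q + ⋯ + q^{m-1}. -/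
noncomputable def qint (m : ℕ) : Polynomial ℚ :=
  ∑ i ∈ Finset.range m, X ^ i

/-- q-factorial. -/
noncomputable def qfact : ℕ → Polynomial ℚ
  | 0 => 1
  | m + 1 => qfact m * qint (m + 1)

/-- Gaussian binomial coefficient, via the q-Pascal recurrence. -/
noncomputable def qbinom : ℕ → ℕ → Polynomial ℚ
  | _, 0 => 1
  | 0, _ + 1 => 0
  | m + 1, k + 1 => qbinom m k + X ^ (k + 1) * qbinom m (k + 1)

/-- q-trinomial coefficient [l]!/([a]![b]![c]!), defined when a+b+c = l. -/
noncomputable def qbinom3 (l a b c : ℕ) : Polynomial ℚ :=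
  if a + b + c = l then qbinom l a * qbinom (l - a) b else 0

/-- Depth after the first `i` steps: #N − #E. -/
def depth (w : List Step) (i : ℕ) : ℤ :=
  ((w.take i).count N : ℤ) - (w.take i).count E

/-- `k` (0 ≤ k ≤ l) achieves the maximal running depth. -/
def isMaxDepth (w : List Step) (k : ℕ) : Bool :=
  (List.range (w.length + 1)).all fun i => decide (depth w i ≤ depth w k)

/-- The first index (number of steps) at which the running depth is maximal. -/
def firstDeep (w : List Step) : ℕ :=
  (List.range (w.length + 1)).findIdx (isMaxDepth w)

/-- The last index at which the running depth is maximal. -/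
def lastDeep (w : List Step) : ℕ :=
  w.length - (List.range (w.length + 1)).reverse.findIdx (isMaxDepth w)

/-- Replace the first deepest step (the step w_k, k = firstDeep) with E. -/
def phi (w : List Step) : List Step := w.set (firstDeep w - 1) E

/-- Replace the step following the last deepest point with N. -/
def phiInv (w : List Step) : List Step := w.set (lastDeep w) N

/-- Number of consecutive D's immediately after the first deepest step. -/
def runS (w : List Step) : ℕ := ((w.drop (firstDeep w)).takeWhile (· == D)).length

/-- Number of consecutive D's immediately before the first deepest step. -/
def runR (w : List Step) : ℕ :=
  ((w.take (firstDeep w - 1)).reverse.takeWhile (· == D)).length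

/-- The window map: replace W₁ = D^r w_k D^s by D^{r-1} E D^{s+1} if r ≥ 1,
and by D^s E if r = 0. -/
def phiWin (w : List Step) : List Step :=
  let k := firstDeep w - 1
  let r := runR w
  let s := runS w
  let seg : List Step :=
    if 1 ≤ r then List.replicate (r - 1) D ++ [E] ++ List.replicate (s + 1) D
    else List.replicate s D ++ [E]
  w.take (k - r) ++ seg ++ w.drop (k + s + 1)

/-- 0-based index of the first step after which the path is above the diagonal. -/
def firstAbove (w : List Step) : ℕ :=
  (List.range w.length).findIdx fun i =>
    decide ((w.take (i + 1)).count E < (w.take (i + 1)).count N)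

/-- The map ψ of Bonin–Shapiro–Simion: replace with E the last N of the maximal
run of consecutive N's beginning at the first step going above the diagonal. -/
def psi (w : List Step) : List Step :=
  let i := firstAbove w
  let j := i + ((w.drop i).takeWhile (· == N)).length - 1
  w.set j E

/-!
Write `l = 2m + c` with `m = l - n`, `c = 2n - l`. Both q-trinomials are `[l]!` divided by
q-factorials, and `[m+1] · qbinom3(l; m-1, m+1, c) = [m] · qbinom3(l; m, m, c)`, so the left side
collapses to `([m+1] - q[m]) · qbinom3(l; m, m, c) = qbinom3(l; m, m, c)`. This equals the right
side because both are `[l]! / ([m]! [m]! [c]!)`.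
-/

theorem qint_add (a b : ℕ) : qint (a + b) = qint a + X ^ a * qint b := by
  simp only [qint, Finset.sum_range_add, Finset.mul_sum, pow_add]

theorem qint_succ_sub_X_mul (m : ℕ) : qint (m + 1) - X * qint m = 1 := by
  rw [add_comm, qint_add]
  simp [qint]

theorem qint_ne_zero {m : ℕ} (hm : 0 < m) : qint m ≠ 0 := by
  intro h
  have h1 := congrArg (eval 1) h
  simp only [qint, eval_finsetSum, eval_pow, eval_X, one_pow, Finset.sum_const,
    Finset.card_range, nsmul_eq_mul, mul_one, eval_zero, Nat.cast_eq_zero] at h1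
  omega

theorem qfact_ne_zero (m : ℕ) : qfact m ≠ 0 := by
  induction m with
  | zero => exact one_ne_zero
  | succ m ih => exact mul_ne_zero ih (qint_ne_zero m.succ_pos)

theorem qfact_succ (m : ℕ) : qfact (m + 1) = qfact m * qint (m + 1) := rfl

theorem qbinom_zero_right (m : ℕ) : qbinom m 0 = 1 := by
  cases m <;> rfl

theorem qbinom_eq_zero_of_lt {m k : ℕ} (h : m < k) : qbinom m k = 0 := by
  induction m generalizing k with
  | zero => obtain ⟨k, rfl⟩ := Nat.exists_eq_succ_of_ne_zero h.ne'; rfl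
  | succ m ih =>
    obtain ⟨k, rfl⟩ := Nat.exists_eq_succ_of_ne_zero (Nat.ne_zero_of_lt h)
    rw [qbinom, ih (by omega), ih (by omega), mul_zero, add_zero]

theorem qbinom_self (m : ℕ) : qbinom m m = 1 := by
  induction m with
  | zero => rfl
  | succ m ih => rw [qbinom, ih, qbinom_eq_zero_of_lt m.lt_succ_self, mul_zero, add_zero]

theorem qbinom_mul_qfact_mul_qfact (a b : ℕ) :
    qbinom (a + b) a * (qfact a * qfact b) = qfact (a + b) := by
  induction a generalizing b with
  | zero => simp [qbinom_zero_right, qfact]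
  | succ a iha =>
    induction b with
    | zero => simp [qbinom_self, qfact]
    | succ b ihb =>
      have hleft := iha (b + 1)
      rw [show a + (b + 1) = a + b + 1 by omega, qfact_succ b] at hleft
      rw [show a + 1 + b = a + b + 1 by omega, qfact_succ a] at ihb
      have hint : qint (a + b + 1 + 1) = qint (a + 1) + X ^ (a + 1) * qint (b + 1) := by
        rw [← qint_add]; ring_nf
      rw [show a + 1 + (b + 1) = a + b + 1 + 1 by omega, qbinom, qfact_succ (a + b + 1),
        qfact_succ a, qfact_succ b, hint]
      linear_combination qint (a + 1) * hleft + X ^ (a + 1) * qint (b + 1) * ihb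

theorem qbinom3_mul_qfact {l a b c : ℕ} (h : a + b + c = l) :
    qbinom3 l a b c * (qfact a * qfact b * qfact c) = qfact l := by
  subst h
  rw [qbinom3, if_pos rfl, add_assoc, Nat.add_sub_cancel_left]
  linear_combination qbinom (a + (b + c)) a * qfact a * qbinom_mul_qfact_mul_qfact b c +
    qbinom_mul_qfact_mul_qfact a (b + c)

theorem qbinom3_eq_qbinom_mul_qbinom (a b c : ℕ) :
    qbinom3 (a + b + c) a b c = qbinom (a + b) a * qbinom (a + b + c) c := by
  apply mul_right_cancel₀ (mul_ne_zero (mul_ne_zero (qfact_ne_zero a) (qfact_ne_zero b))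
    (qfact_ne_zero c))
  have hab := qbinom_mul_qfact_mul_qfact a b
  have habc := qbinom_mul_qfact_mul_qfact c (a + b)
  rw [add_comm c] at habc
  rw [qbinom3_mul_qfact rfl]
  linear_combination (-qbinom (a + b + c) c * qfact c) * hab - habc

theorem qint_mul_qbinom3_pred_succ {l a b c : ℕ} (h : a + b + c = l) :
    qint (b + 1) * qbinom3 l (a - 1) (b + 1) c = qint a * qbinom3 l a b c := by
  cases a with
  | zero => simp [qbinom3, qint, show b + 1 + c ≠ l by omega]
  | succ a =>
    apply mul_right_cancel₀ (mul_ne_zero (mul_ne_zero (qfact_ne_zero a) (qfact_ne_zero b))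
      (qfact_ne_zero c))
    have hpred := qbinom3_mul_qfact (show a + (b + 1) + c = l by omega)
    have hself := qbinom3_mul_qfact h
    rw [qfact_succ] at hpred hself
    rw [Nat.add_sub_cancel]
    linear_combination hpred - hself

/-- the q-multinomial identity
qbinom3(l; l-n, l-n, 2n-l) − q·qbinom3(l; l-n-1, l-n+1, 2n-l)
  = (1/[l-n+1]) · qbinom(2(l-n), l-n) · qbinom(l, 2n-l)
for n ≤ l ≤ 2n (stated with the denominator [l-n+1] cleared). -/
theorem q_multinomial_identity_EltN (n l : ℕ) (hnl : n ≤ l) (hl : l ≤ 2 * n) :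
    qint (l - n + 1) *
        (qbinom3 l (l - n) (l - n) (2 * n - l) -
          X * qbinom3 l (l - n - 1) (l - n + 1) (2 * n - l)) =
      qbinom (2 * (l - n)) (l - n) * qbinom l (2 * n - l) := by
  obtain ⟨m, c, rfl, rfl⟩ : ∃ m c, n = m + c ∧ l = m + m + c :=
    ⟨l - n, 2 * n - l, by omega, by omega⟩
  rw [show m + m + c - (m + c) = m by omega, show 2 * (m + c) - (m + m + c) = c by omega]
  calc qint (m + 1) * (qbinom3 (m + m + c) m m c - X * qbinom3 (m + m + c) (m - 1) (m + 1) c)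
      = (qint (m + 1) - X * qint m) * qbinom3 (m + m + c) m m c := by
        rw [mul_sub, mul_left_comm, qint_mul_qbinom3_pred_succ rfl]
        ring
    _ = qbinom (2 * m) m * qbinom (m + m + c) c := by
        rw [qint_succ_sub_X_mul, one_mul, qbinom3_eq_qbinom_mul_qbinom, two_mul]
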